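/- arXiv:1105.5989 — 6 statements merged into one kernel-verified Lean document; each statement's English description precedes it below -/
import Mathlib

section
/- Let A and B be finite abelian p-groups (written additively), N : B → A surjective and ι : A → B injective ℤ_p-linear maps, with N ∘ ι = p·id_A, p-rank(A) = p-rank(B) = r, and |B|/|A| = p^r. Then ι(A) = pB. -/
/-- For finite abelian `p`-groups `A`, `B` with surjective `N : B → A`,
injective `ι : A → B`, `N ∘ ι = p`, equal `p`-ranks `r`, and `|B|/|A| = p^r`, one has
`ι(A) = pB`. -/
theorem stmt_4 (p : ℕ) (hp : p.Prime) (A B : Type*) [AddCommGroup A] [AddCommGroup B]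
    [Fintype A] [Fintype B]
    (hpA : ∀ x : A, ∃ k : ℕ, p ^ k • x = 0) (hpB : ∀ x : B, ∃ k : ℕ, p ^ k • x = 0)
    (N : B →+ A) (ι : A →+ B)
    (hN : Function.Surjective N) (hι : Function.Injective ι)
    (hcomp : ∀ x : A, N (ι x) = p • x)
    (r : ℕ)
    (hrA : Nat.card (A ⧸ (p • AddMonoidHom.id A).range) = p ^ r)
    (hrB : Nat.card (B ⧸ (p • AddMonoidHom.id B).range) = p ^ r)
    (hcard : Nat.card B = p ^ r * Nat.card A) :
    ι.range = (p • AddMonoidHom.id B).range := by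
  have hpr : (p : ℕ) ^ r ≠ 0 := pow_ne_zero _ hp.pos.ne'
  set PA := (p • AddMonoidHom.id A).range with hPA
  set PB := (p • AddMonoidHom.id B).range with hPB
  -- f : B → A/pA
  set f : B →+ A ⧸ PA := (QuotientAddGroup.mk' PA).comp N with hf
  have hfsurj : Function.Surjective f :=
    (QuotientAddGroup.mk'_surjective PA).comp hN
  -- card of ker f
  have hker : Nat.card f.ker = Nat.card A := by
    have h1 : Nat.card B = Nat.card (B ⧸ f.ker) * Nat.card f.ker :=
      AddSubgroup.card_eq_card_quotient_mul_card_addSubgroup f.ker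
    have h2 : Nat.card (B ⧸ f.ker) = p ^ r := by
      rw [Nat.card_congr (QuotientAddGroup.quotientKerEquivOfSurjective f hfsurj).toEquiv, hrA]
    rw [h2, hcard] at h1
    exact (Nat.eq_of_mul_eq_mul_left (Nat.pos_of_ne_zero hpr) h1.symm)
  -- ι.range ≤ ker f
  have hle1 : ι.range ≤ f.ker := by
    rintro x ⟨a, rfl⟩
    have : f (ι a) = 0 := by
      simp only [hf, AddMonoidHom.comp_apply, hcomp, QuotientAddGroup.mk'_apply]
      rw [QuotientAddGroup.eq_zero_iff]
      exact ⟨a, rfl⟩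
    exact this
  -- card ι.range = card A
  have hcardι : Nat.card ι.range = Nat.card A :=
    Nat.card_congr (Equiv.ofInjective ι hι).symm
  -- ι.range = ker f
  have heq1 : ι.range = f.ker :=
    AddSubgroup.eq_of_le_of_card_ge hle1 (by rw [hker, hcardι])
  -- PB ≤ ker f
  have hle2 : PB ≤ ι.range := by
    rw [heq1]
    rintro x ⟨b, rfl⟩
    show f ((p • AddMonoidHom.id B) b) = 0
    have : (p • AddMonoidHom.id B) b = p • b := rfl
    rw [this]
    show (QuotientAddGroup.mk' PA) (N (p • b)) = 0
    rw [map_nsmul, QuotientAddGroup.mk'_apply, QuotientAddGroup.eq_zero_iff]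
    exact ⟨N b, rfl⟩
  -- card PB = card A
  have hcardPB : Nat.card PB = Nat.card A := by
    have h1 : Nat.card B = Nat.card (B ⧸ PB) * Nat.card PB :=
      AddSubgroup.card_eq_card_quotient_mul_card_addSubgroup PB
    rw [hrB, hcard] at h1
    exact (Nat.eq_of_mul_eq_mul_left (Nat.pos_of_ne_zero hpr) h1.symm)
  exact (AddSubgroup.eq_of_le_of_card_ge hle2 (by rw [hcardι, hcardPB])).symm
end

section
/- Let A be a finite abelian p-group which is cyclic as a ℤ_p[T]-module (for some nilpotent-acting T) with p-rank n. Then there exists a polynomial g(T) = T^n − p·h(T) ∈ ℤ_p[T], with deg(h) < n, that annihilates A. -/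
/-!
On the `𝔽_p`-vector space `A/pA`, of dimension `n`, `T` induces a nilpotent endomorphism, whose
characteristic polynomial is therefore `X ^ n`; by Cayley–Hamilton `T ^ n a = p • b` for some `b`.
Dividing by the monic `X ^ n` then writes every element as `h(T) a + p • y` with `deg h < n`;
iterating, and using that some `p ^ e` kills `A`, gives `b = h(T) a`. So `T ^ n` and `p • h(T)`
agree on the generator `a`, hence on all of `A`.
-/

open Polynomial

theorem IsNilpotent.pow_finrank_eq_zero {R M : Type*} [CommRing R] [IsDomain R] [AddCommGroup M]
    [Module R M] [Module.Finite R M] [Module.Free R M] {φ : Module.End R M} (hφ : IsNilpotent φ) :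
    φ ^ Module.finrank R M = 0 := by
  simpa [hφ.charpoly_eq_X_pow_finrank] using φ.aeval_self_charpoly

theorem exists_pow_nsmul_eq_zero {G : Type*} [AddMonoid G] [Finite G] {p : ℕ}
    (h : ∀ x : G, ∃ k, p ^ k • x = 0) : ∃ e, ∀ x : G, p ^ e • x = 0 := by
  choose k hk using h
  have := Fintype.ofFinite G
  refine ⟨Finset.univ.sup k, fun x => ?_⟩
  obtain ⟨c, hc⟩ := Nat.exists_eq_add_of_le (Finset.le_sup (f := k) (Finset.mem_univ x))
  rw [hc, pow_add, mul_comm, mul_smul, hk, smul_zero]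

theorem AddSubgroup.mem_of_forall_exists_sub_nsmul_mem {A : Type*} [AddCommGroup A]
    {S : AddSubgroup A} {k e : ℕ} (hS : ∀ x, ∃ y, x - k • y ∈ S) (he : ∀ x : A, k ^ e • x = 0)
    (x : A) : x ∈ S := by
  have hpow (m : ℕ) (x : A) : ∃ y, x - k ^ m • y ∈ S := by
    induction m generalizing x with
    | zero => exact ⟨x, by simp [S.zero_mem]⟩
    | succ m ih =>
      obtain ⟨y, hy⟩ := ih x
      obtain ⟨z, hz⟩ := hS y
      refine ⟨z, ?_⟩
      convert S.add_mem hy (S.nsmul_mem hz (k ^ m)) using 1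
      rw [smul_sub, smul_smul, ← pow_succ]
      abel
  obtain ⟨y, hy⟩ := hpow e x
  simpa [he] using hy

namespace AddMonoid.End

variable {A : Type*} [AddCommGroup A]

theorem pow_apply_mem_of_card_quotient {p n : ℕ} [hp : Fact p.Prime] {P : AddSubgroup A}
    (hpP : ∀ x, p • x ∈ P) {T : AddMonoid.End A} (hTP : P ≤ P.comap T) (hT : IsNilpotent T)
    (hcard : Nat.card (A ⧸ P) = p ^ n) (x : A) : (T ^ n) x ∈ P := by
  have _ := QuotientAddGroup.zmodModule hpP
  have : Finite (A ⧸ P) := Nat.finite_of_card_ne_zero (by simp [hcard, hp.out.ne_zero])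
  have : Module.Finite (ZMod p) (A ⧸ P) := .of_finite
  let T' : Module.End (ZMod p) (A ⧸ P) := (QuotientAddGroup.map P P T hTP).toZModLinearMap p
  have hT'_pow (k : ℕ) (y : A) : (T' ^ k) (y : A ⧸ P) = ((T ^ k) y : A ⧸ P) := by
    induction k generalizing y with
    | zero => rfl
    | succ k ih =>
      rw [pow_succ, Module.End.mul_apply, pow_succ, coe_mul, Function.comp_apply, ← ih]
      rfl
  have hT'_nil : IsNilpotent T' := by
    obtain ⟨M, hM⟩ := hT
    refine ⟨M, LinearMap.ext fun y => ?_⟩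
    induction y using QuotientAddGroup.induction_on
    simp [hT'_pow, hM]
  have hrank : Module.finrank (ZMod p) (A ⧸ P) = n := by
    have := Module.natCard_eq_pow_finrank (K := ZMod p) (V := A ⧸ P)
    rw [hcard, Nat.card_zmod] at this
    exact (Nat.pow_right_injective hp.out.two_le this).symm
  rw [← QuotientAddGroup.eq_zero_iff, ← hT'_pow, ← hrank, hT'_nil.pow_finrank_eq_zero,
    LinearMap.zero_apply]

theorem aeval_add_apply (T : AddMonoid.End A) (f g : ℤ[X]) (x : A) :
    aeval T (f + g) x = aeval T f x + aeval T g x := by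
  rw [map_add]; rfl

theorem aeval_mul_apply (T : AddMonoid.End A) (f g : ℤ[X]) (x : A) :
    aeval T (f * g) x = aeval T f (aeval T g x) := by
  rw [map_mul]; rfl

theorem aeval_eq_of_aeval_apply_eq {T : AddMonoid.End A} {a : A}
    (hcyc : ∀ x : A, ∃ f : ℤ[X], x = aeval T f a) {f g : ℤ[X]}
    (h : aeval T f a = aeval T g a) : aeval T f = aeval T g := by
  ext x
  obtain ⟨q, rfl⟩ := hcyc x
  rw [← aeval_mul_apply, mul_comm, aeval_mul_apply, h, ← aeval_mul_apply, mul_comm,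
    aeval_mul_apply]

noncomputable def aevalAt (T : AddMonoid.End A) (a : A) : ℤ[X] →+ A :=
  AddMonoidHom.mk' (fun f => aeval T f a) fun f g => aeval_add_apply T f g a

theorem exists_sub_nsmul_mem_map_degreeLT {T : AddMonoid.End A} {a b : A} {n k : ℕ}
    (hcyc : ∀ x : A, ∃ f : ℤ[X], x = aeval T f a) (hb : (T ^ n) a = k • b) (x : A) :
    ∃ y, x - k • y ∈ (degreeLT ℤ n).toAddSubgroup.map (aevalAt T a) := by
  obtain ⟨f, rfl⟩ := hcyc x
  refine ⟨aeval T (f /ₘ X ^ n) b, f %ₘ X ^ n, mem_degreeLT.2 ?_, ?_⟩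
  · simpa using degree_modByMonic_lt f (monic_X_pow n)
  · have hf : aeval T f a = aeval T (f %ₘ X ^ n) a + k • aeval T (f /ₘ X ^ n) b := by
      conv_lhs => rw [← modByMonic_add_div f (X ^ n)]
      rw [aeval_add_apply, mul_comm, aeval_mul_apply, aeval_X_pow, hb, map_nsmul]
    simp [aevalAt, hf]

end AddMonoid.End

/-- A finite abelian `p`-group `A` which is a cyclic `ℤ_p[T]`-module (with
nilpotent `T`-action) of `p`-rank `n` is annihilated by a polynomial of the form
`g(T) = T^n − p·h(T)` with `deg h < n`. -/
theorem stmt_9 (p : ℕ) (hp : p.Prime) (A : Type*) [AddCommGroup A] [Fintype A]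
    (hpA : ∀ x : A, ∃ k : ℕ, p ^ k • x = 0)
    (T : AddMonoid.End A) (hnil : ∃ M : ℕ, T ^ M = 0)
    (a : A) (hcyc : ∀ x : A, ∃ f : Polynomial ℤ, x = Polynomial.aeval T f a)
    (n : ℕ) (hrank : Nat.card (A ⧸ (p • AddMonoidHom.id A).range) = p ^ n) :
    ∃ h : Polynomial ℤ, h.degree < (n : WithBot ℕ) ∧
      ∀ x : A, (T ^ n) x = Polynomial.aeval T ((p : Polynomial ℤ) * h) x := by
  have := Fact.mk hp
  obtain ⟨b, hb⟩ : (T ^ n) a ∈ (p • AddMonoidHom.id A).range :=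
    AddMonoid.End.pow_apply_mem_of_card_quotient (P := (p • AddMonoidHom.id A).range)
      (fun x => ⟨x, rfl⟩)
      (fun _ ⟨y, hy⟩ => ⟨T y, by rw [← hy]; exact (map_nsmul T p y).symm⟩) hnil hrank a
  obtain ⟨e, he⟩ := exists_pow_nsmul_eq_zero hpA
  obtain ⟨h, hh, rfl⟩ := AddSubgroup.mem_of_forall_exists_sub_nsmul_mem
    (AddMonoid.End.exists_sub_nsmul_mem_map_degreeLT hcyc hb.symm) he b
  refine ⟨h, mem_degreeLT.1 hh, fun x => ?_⟩
  have hX : aeval T (X ^ n : ℤ[X]) a = aeval T ((p : ℤ[X]) * h) a := by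
    rw [aeval_X_pow, ← hb, map_mul, map_natCast]
    rfl
  simpa using congrArg (· x) (AddMonoid.End.aeval_eq_of_aeval_apply_eq hcyc hX)
end

section
/- Let (A,B) be a conic transition. If the socle S(A) = A[p] is a cyclic 𝔽_p[T]-module, then the socle S(B) = B[p] is also a cyclic 𝔽_p[T]-module. -/
/-!
On the socles `A[p]` and `B[p]`, viewed as `𝔽_p`-vector spaces, `T` induces nilpotent
endomorphisms, and a nilpotent endomorphism `f` of a finite-dimensional space is cyclic
exactly when `dim ker f ≤ 1`: a cyclic vector `v` gives `V = 𝔽_p v + f V`, and conversely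
any `v ∉ f V` spans `V` modulo `f V`, so the `f`-stable span of `v` is everything because
`f` is nilpotent.
As `ω` has no constant term, `T x = 0` forces `ω x = 0`, so `x ∈ ι(A)`; injectivity of `ι`
then gives `S(B)[T] ⊆ ι(S(A)[T])`, whence `dim S(B)[T] ≤ dim S(A)[T] ≤ 1`.
-/

/-- A *conic transition* `(A, B)` (Definition 2.4 of the paper): finite abelian
`p`-groups `A`, `B` which are cyclic `ℤ_p[T]`-modules (via commuting endomorphisms
`TA`, `TB` coming from the action of a cyclic `p`-group), with a surjective norm
`N : B → A`, an injective lift `ι : A → B` satisfying `N ∘ ι = p`, a distinguished-type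
polynomial `ω ≡ T^d mod p` annihilating `A` with `ι ∘ N = ν(TB)` for
`ν = ((ω+1)^p − 1)/ω = Σ_{i<p} (ω+1)^i`, kernel `ker N = ω·B`, and
`ω·x = 0 → x ∈ ι(A)`. -/
structure ConicTransition (p : ℕ) (A B : Type*) [AddCommGroup A] [AddCommGroup B] where
  hp : p.Prime
  N : B →+ A
  ι : A →+ B
  TA : AddMonoid.End A
  TB : AddMonoid.End B
  genA : A
  genB : B
  ω : Polynomial ℤ
  d : ℕ
  hNsurj : Function.Surjective N
  hιinj : Function.Injective ι
  hNι : ∀ x : A, N (ι x) = p • x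
  hcommN : ∀ x : B, N (TB x) = TA (N x)
  hcommι : ∀ x : A, ι (TA x) = TB (ι x)
  hTAnil : ∃ M : ℕ, TA ^ M = 0
  hTBnil : ∃ M : ℕ, TB ^ M = 0
  hgen : N genB = genA
  hcycA : ∀ x : A, ∃ f : Polynomial ℤ, x = Polynomial.aeval TA f genA
  hcycB : ∀ x : B, ∃ f : Polynomial ℤ, x = Polynomial.aeval TB f genB
  hωmonic : ω.Monic
  hωdeg : ω.natDegree = d
  hdpos : 0 < d
  hωmodp : ∀ i < d, (p : ℤ) ∣ ω.coeff i
  hω0 : ω.coeff 0 = 0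
  hωA : ∀ x : A, Polynomial.aeval TA ω x = 0
  hν : ∀ x : B, ι (N x) =
    Polynomial.aeval TB (∑ i ∈ Finset.range p, (ω + 1) ^ i) x
  hker : ∀ x : B, N x = 0 ↔ ∃ y : B, x = Polynomial.aeval TB ω y
  hωι : ∀ x : B, Polynomial.aeval TB ω x = 0 → ∃ a : A, x = ι a
  hpA : ∀ x : A, ∃ k : ℕ, p ^ k • x = 0
  hpB : ∀ x : B, ∃ k : ℕ, p ^ k • x = 0

open Module Submodule Polynomial

namespace Module.End

section Semiring

variable {R M : Type*} [Semiring R] [AddCommMonoid M] [Module R M]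

lemma span_range_pow_apply_le_comap (f : End R M) (v : M) :
    span R (Set.range fun i : ℕ => (f ^ i) v) ≤
      (span R (Set.range fun i : ℕ => (f ^ i) v)).comap f := by
  rw [span_le]
  rintro _ ⟨i, rfl⟩
  exact subset_span ⟨i + 1, by simp only [pow_succ', Module.End.mul_apply]⟩

lemma span_range_pow_apply_le_sup_range (f : End R M) (v : M) :
    span R (Set.range fun i : ℕ => (f ^ i) v) ≤ R ∙ v ⊔ LinearMap.range f := by
  rw [span_le]
  rintro _ ⟨_ | i, rfl⟩
  · exact mem_sup_left (mem_span_singleton_self v)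
  · exact mem_sup_right ⟨(f ^ i) v, by simp only [pow_succ', Module.End.mul_apply]⟩

lemma eq_top_of_sup_range_eq_top {f : End R M} (hf : IsNilpotent f) {S : Submodule R M}
    (hS : S ≤ S.comap f) (h : S ⊔ LinearMap.range f = ⊤) : S = ⊤ := by
  have key : ∀ k : ℕ, S ⊔ LinearMap.range (f ^ k) = ⊤ := by
    intro k
    induction k with
    | zero => simp [Module.End.one_eq_id]
    | succ k ih =>
      have hmap :
          (S ⊔ LinearMap.range (f ^ k)).map f ≤ S ⊔ LinearMap.range (f ^ (k + 1)) := by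
        rw [Submodule.map_sup, pow_succ', Module.End.mul_eq_comp, LinearMap.range_comp]
        exact sup_le_sup_right (map_le_iff_le_comap.mpr hS) _
      rw [ih, Submodule.map_top] at hmap
      rw [eq_top_iff, ← h]
      exact sup_le le_sup_left hmap
  obtain ⟨k, hk⟩ := hf
  simpa [hk] using key k

end Semiring

section Field

variable {K V : Type*} [Field K] [AddCommGroup V] [Module K V]

lemma finrank_ker_le_one_of_span_range_pow_eq_top [FiniteDimensional K V] (f : End K V)
    (v : V) (hv : span K (Set.range fun i : ℕ => (f ^ i) v) = ⊤) :
    finrank K (LinearMap.ker f) ≤ 1 := by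
  have hsup : K ∙ v ⊔ LinearMap.range f = ⊤ :=
    top_le_iff.mp (hv ▸ span_range_pow_apply_le_sup_range f v)
  have := finrank_add_le_finrank_add_finrank (K ∙ v) (LinearMap.range f)
  rw [hsup, finrank_top] at this
  have : finrank K (K ∙ v) ≤ 1 := (finrank_span_le_card ({v} : Set V)).trans (by simp)
  have := LinearMap.finrank_range_add_finrank_ker f
  omega

lemma exists_span_range_pow_eq_top [FiniteDimensional K V] {f : End K V} (hf : IsNilpotent f)
    (hker : finrank K (LinearMap.ker f) ≤ 1) :
    ∃ v : V, span K (Set.range fun i : ℕ => (f ^ i) v) = ⊤ := by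
  by_cases hrange : LinearMap.range f = ⊤
  · refine ⟨0, ?_⟩
    have hbot : (⊥ : Submodule K V) = ⊤ :=
      eq_top_of_sup_range_eq_top hf bot_le (by rw [hrange, sup_top_eq])
    rw [← hbot, eq_bot_iff, span_le]
    rintro _ ⟨i, rfl⟩
    simp
  obtain ⟨v, -, hv⟩ := SetLike.exists_of_lt (lt_top_iff_ne_top.mpr hrange)
  have hsup : K ∙ v ⊔ LinearMap.range f = ⊤ := by
    have hlt : LinearMap.range f < K ∙ v ⊔ LinearMap.range f :=
      lt_of_le_of_ne le_sup_right fun h => hv (h ▸ mem_sup_left (mem_span_singleton_self v))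
    have := Submodule.finrank_lt_finrank_of_lt hlt
    have := Submodule.finrank_le (K ∙ v ⊔ LinearMap.range f)
    have := LinearMap.finrank_range_add_finrank_ker f
    exact eq_top_of_finrank_eq (by omega)
  refine ⟨v, eq_top_of_sup_range_eq_top hf (span_range_pow_apply_le_comap f v) ?_⟩
  rw [eq_top_iff, ← hsup]
  have hv0 : v ∈ span K (Set.range fun i : ℕ => (f ^ i) v) := subset_span ⟨0, by simp⟩
  exact sup_le_sup_right ((span_singleton_le_iff_mem _ _).mpr hv0) _

end Field

end Module.End

lemma Polynomial.aeval_apply_eq_zero_of_coeff_zero {M : Type*} [AddCommGroup M]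
    {T : AddMonoid.End M} {g : ℤ[X]} (hg : g.coeff 0 = 0) {x : M} (hx : T x = 0) :
    aeval T g x = 0 := by
  obtain ⟨q, rfl⟩ := X_dvd_iff.mpr hg
  rw [mul_comm, map_mul, aeval_X]
  exact (congrArg (aeval T q) hx).trans (map_zero _)

lemma AddMonoid.End.mem_span_range_pow_apply_iff {M : Type*} [AddCommGroup M]
    (T : AddMonoid.End M) (v x : M) :
    x ∈ span ℤ (Set.range fun i : ℕ => (T ^ i) v) ↔ ∃ g : ℤ[X], x = aeval T g v := by
  constructor
  · intro hx
    induction hx using span_induction with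
    | mem _ h =>
      obtain ⟨i, rfl⟩ := h
      exact ⟨X ^ i, by simp⟩
    | zero => exact ⟨0, by simp⟩
    | add _ _ _ _ h₁ h₂ =>
      obtain ⟨g₁, rfl⟩ := h₁
      obtain ⟨g₂, rfl⟩ := h₂
      exact ⟨g₁ + g₂, by rw [map_add]; rfl⟩
    | smul c _ _ h =>
      obtain ⟨g, rfl⟩ := h
      exact ⟨c • g, by simp⟩
  · rintro ⟨g, rfl⟩
    induction g using Polynomial.induction_on' with
    | add g₁ g₂ h₁ h₂ => rw [map_add]; exact add_mem h₁ h₂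
    | monomial i c =>
      have := smul_mem (span ℤ (Set.range fun i : ℕ => (T ^ i) v)) c (subset_span ⟨i, rfl⟩)
      simpa [aeval_monomial] using this

open AddSubgroup (torsionBy)

attribute [local instance] AddSubgroup.torsionBy.zmodModule

section TorsionBy

variable {M N : Type*} [AddCommGroup M] [AddCommGroup N] {n : ℕ}

variable (n) in
def AddMonoidHom.torsionByMap (φ : M →+ N) : torsionBy M n →ₗ[ZMod n] torsionBy N n :=
  AddMonoidHom.toZModLinearMap n
    { toFun x := ⟨φ x, by
        rw [AddSubgroup.torsionBy.nsmul_iff, ← map_nsmul, AddSubgroup.torsionBy.nsmul_iff.mp x.2,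
          map_zero]⟩
      map_zero' := by ext; simp
      map_add' x y := by ext; simp }

namespace AddMonoid.End

@[simp]
lemma coe_torsionByMap_pow_apply (T : AddMonoid.End M) (i : ℕ) (x : torsionBy M n) :
    ((AddMonoidHom.torsionByMap n T ^ i) x : M) = (T ^ i) x := by
  induction i generalizing x with
  | zero => rfl
  | succ i ih => rw [pow_succ, Module.End.mul_apply, ih, pow_succ]; rfl

lemma isNilpotent_torsionByMap {T : AddMonoid.End M} (hT : IsNilpotent T) :
    IsNilpotent (AddMonoidHom.torsionByMap n T) := by
  obtain ⟨k, hk⟩ := hT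
  exact ⟨k, LinearMap.ext fun x => Subtype.ext (by simp [hk])⟩

lemma mem_span_range_torsionByMap_pow_iff (T : AddMonoid.End M) (v x : torsionBy M n) :
    x ∈ span (ZMod n) (Set.range fun i : ℕ => (AddMonoidHom.torsionByMap n T ^ i) v) ↔
      ∃ g : ℤ[X], (x : M) = aeval T g v := by
  rw [← restrictScalars_mem ℤ, restrictScalars_span ℤ (ZMod n) ZMod.intCast_surjective,
    ← mem_span_range_pow_apply_iff,
    ← comap_map_eq_of_injective (f := (torsionBy M n).subtype.toIntLinearMap)
      Subtype.val_injective (span ℤ _), mem_comap, map_span, ← Set.range_comp]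
  simp [Function.comp_def]

end AddMonoid.End

end TorsionBy

lemma ConicTransition.ker_torsionByMap_TB_le {p : ℕ} {A B : Type*} [AddCommGroup A]
    [AddCommGroup B] (ct : ConicTransition p A B) :
    LinearMap.ker (AddMonoidHom.torsionByMap p ct.TB) ≤
      (LinearMap.ker (AddMonoidHom.torsionByMap p ct.TA)).map
        (AddMonoidHom.torsionByMap p ct.ι) := by
  rintro ⟨x, hpx⟩ hTx
  replace hTx : ct.TB x = 0 := congrArg Subtype.val hTx
  obtain ⟨a, rfl⟩ := ct.hωι x (Polynomial.aeval_apply_eq_zero_of_coeff_zero ct.hω0 hTx)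
  have hpa : a ∈ torsionBy A p := by
    rw [AddSubgroup.torsionBy.nsmul_iff] at hpx ⊢
    exact ct.hιinj (by rw [map_nsmul, hpx, map_zero])
  have hTa : ct.TA a = 0 := ct.hιinj (by rw [ct.hcommι, hTx, map_zero])
  exact ⟨⟨a, hpa⟩, Subtype.ext hTa, rfl⟩

theorem stmt_11_general (p : ℕ) (A B : Type*) [AddCommGroup A] [AddCommGroup B]
    [Fintype B] (ct : ConicTransition p A B)
    (s : A) (hs : p • s = 0)
    (hSA : ∀ x : A, p • x = 0 → ∃ f : Polynomial ℤ, x = Polynomial.aeval ct.TA f s) :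
    ∃ s' : B, p • s' = 0 ∧
      ∀ x : B, p • x = 0 → ∃ f : Polynomial ℤ, x = Polynomial.aeval ct.TB f s' := by
  have : Fact p.Prime := ⟨ct.hp⟩
  have : Finite A := Finite.of_surjective ct.N ct.hNsurj
  let s₀ : torsionBy A p := ⟨s, AddSubgroup.torsionBy.nsmul_iff.mpr hs⟩
  have hcycA :
      span (ZMod p) (Set.range fun i : ℕ => (AddMonoidHom.torsionByMap p ct.TA ^ i) s₀) = ⊤ :=
    eq_top_iff'.mpr fun x => (AddMonoid.End.mem_span_range_torsionByMap_pow_iff ct.TA s₀ x).mpr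
      (hSA x (AddSubgroup.torsionBy.nsmul_iff.mp x.2))
  have hkerB : finrank (ZMod p) (LinearMap.ker (AddMonoidHom.torsionByMap p ct.TB)) ≤ 1 :=
    (Submodule.finrank_mono ct.ker_torsionByMap_TB_le).trans <|
      (Submodule.finrank_map_le _ _).trans <|
        Module.End.finrank_ker_le_one_of_span_range_pow_eq_top _ s₀ hcycA
  obtain ⟨v, hv⟩ :=
    Module.End.exists_span_range_pow_eq_top (AddMonoid.End.isNilpotent_torsionByMap ct.hTBnil) hkerB
  refine ⟨v, AddSubgroup.torsionBy.nsmul_iff.mp v.2, fun x hx => ?_⟩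
  exact (AddMonoid.End.mem_span_range_torsionByMap_pow_iff ct.TB v
    ⟨x, AddSubgroup.torsionBy.nsmul_iff.mpr hx⟩).mp (hv ▸ mem_top)

/-- In a conic transition `(A, B)`, if the socle `S(A) = A[p]` is a cyclic
`𝔽_p[T]`-module, then so is the socle `S(B) = B[p]`. -/
theorem stmt_11 (p : ℕ) (A B : Type*) [AddCommGroup A] [AddCommGroup B]
    [Fintype A] [Fintype B] (ct : ConicTransition p A B)
    (s : A) (hs : p • s = 0)
    (hSA : ∀ x : A, p • x = 0 → ∃ f : Polynomial ℤ, x = Polynomial.aeval ct.TA f s) :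
    ∃ s' : B, p • s' = 0 ∧
      ∀ x : B, p • x = 0 → ∃ f : Polynomial ℤ, x = Polynomial.aeval ct.TB f s' :=
  stmt_11_general p A B ct s hs hSA
end

section
/- Let (A,B) be a conic transition in which A is annihilated by ω(T) where ω ≡ T^d mod p, and suppose r = p-rank(A) < d. Then p-rank(B) = r, i.e. the transition is stable. -/
/-!
Everything happens in the `𝔽_p`-vector spaces `A/pA` and `B/pB`, on which `T` acts nilpotently.
As `A/pA` has dimension `r`, Cayley–Hamilton gives `T^r = 0` there, so `T^r a = p h(T) a` for the
generator `a`. The norm kills `T^r b - p h(T) b`, which therefore equals `ω(T) f(T) b`. Modulo `p`,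
where `ω ≡ T^d`, this reads `T^r b = T^(d-r) f(T) (T^r b)`; since `d > r` the operator
`T^(d-r) f(T)` is nilpotent, so `T^r b ≡ 0`. Hence `B/pB` is spanned by `b, …, T^(r-1) b` and
`|B/pB| ≤ p^r`, while `N` induces a surjection `B/pB → A/pA`.
-/

open Polynomial Module

abbrev QuotNsmul (p : ℕ) (M : Type*) [AddCommGroup M] : Type _ :=
  M ⧸ (p • AddMonoidHom.id M).range

theorem Polynomial.map_intCastRingHom_eq_X_pow {p d : ℕ} {ω : ℤ[X]} (hmonic : ω.Monic)
    (hdeg : ω.natDegree = d) (hcoeff : ∀ i < d, (p : ℤ) ∣ ω.coeff i) :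
    ω.map (Int.castRingHom (ZMod p)) = X ^ d := by
  ext i
  rw [coeff_map, coeff_X_pow, eq_intCast]
  rcases lt_trichotomy i d with hi | rfl | hi
  · rw [if_neg hi.ne, ZMod.intCast_zmod_eq_zero_iff_dvd]
    exact hcoeff i hi
  · rw [if_pos rfl, ← hdeg, hmonic.coeff_natDegree, Int.cast_one]
  · rw [if_neg hi.ne', coeff_eq_zero_of_natDegree_lt (hdeg ▸ hi), Int.cast_zero]

theorem AddMonoidHom.map_aeval_apply {M N : Type*} [AddCommGroup M] [AddCommGroup N]
    (φ : M →+ N) {S : AddMonoid.End M} {T : AddMonoid.End N} (h : Function.Semiconj φ S T)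
    (f : ℤ[X]) (x : M) : φ (aeval S f x) = aeval T f (φ x) := by
  induction f using Polynomial.induction_on' with
  | add f₁ f₂ h₁ h₂ =>
    rw [map_add, map_add]
    change φ (aeval S f₁ x + aeval S f₂ x) = aeval T f₁ (φ x) + aeval T f₂ (φ x)
    rw [map_add, h₁, h₂]
  | monomial n c =>
    simp only [aeval_monomial, algebraMap_int_eq, eq_intCast, AddMonoid.End.coe_mul,
      Function.comp_apply, AddMonoid.End.intCast_apply, AddMonoid.End.coe_pow, map_zsmul,
      (h.iterate_right n).eq]

theorem Module.End.aeval_apply_mem_span_pow_apply {R V : Type*} [Ring R] [AddCommGroup V]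
    [Module R V] {S : Module.End R V} {g : V} {r : ℕ} (hg : (S ^ r) g = 0) (f : ℤ[X]) :
    aeval S f g ∈ Submodule.span R (Set.range fun i : Fin r => (S ^ (i : ℕ)) g) := by
  induction f using Polynomial.induction_on' with
  | add f₁ f₂ h₁ h₂ =>
    rw [map_add, LinearMap.add_apply]
    exact add_mem h₁ h₂
  | monomial n c =>
    rw [aeval_monomial, Module.End.mul_apply, algebraMap_int_eq, eq_intCast,
      Module.End.intCast_apply]
    refine zsmul_mem ?_ c
    rcases lt_or_ge n r with hn | hn
    · exact Submodule.subset_span ⟨⟨n, hn⟩, rfl⟩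
    · rw [← Nat.sub_add_cancel hn, pow_add, Module.End.mul_apply, hg, map_zero]
      exact zero_mem _

theorem Module.End.eq_zero_of_isNilpotent_of_apply_eq_self {R V : Type*} [Semiring R]
    [AddCommMonoid V] [Module R V] {S : Module.End R V} (hS : IsNilpotent S) {v : V}
    (hv : S v = v) : v = 0 := by
  obtain ⟨n, hn⟩ := hS
  calc v = S^[n] v := (Function.IsFixedPt.iterate hv n).symm
    _ = (S ^ n) v := (Module.End.pow_apply S n v).symm
    _ = 0 := by rw [hn, LinearMap.zero_apply]

namespace QuotNsmul

variable (p : ℕ) {M N : Type*} [AddCommGroup M] [AddCommGroup N]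

instance : Module (ZMod p) (QuotNsmul p M) :=
  QuotientAddGroup.zmodModule fun x => ⟨x, rfl⟩

theorem mk_eq_zero_iff {x : M} : (x : QuotNsmul p M) = 0 ↔ ∃ y, p • y = x :=
  QuotientAddGroup.eq_zero_iff x

theorem mk_nsmul_self (x : M) : ((p • x : M) : QuotNsmul p M) = 0 :=
  (mk_eq_zero_iff p).2 ⟨x, rfl⟩

theorem range_nsmul_le_comap (f : M →+ N) :
    (p • AddMonoidHom.id M).range ≤ (p • AddMonoidHom.id N).range.comap f := by
  rintro _ ⟨y, rfl⟩
  exact ⟨f y, (map_nsmul f p y).symm⟩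

def map (f : M →+ N) : QuotNsmul p M →+ QuotNsmul p N :=
  QuotientAddGroup.map _ _ f (range_nsmul_le_comap p f)

theorem map_surjective {f : M →+ N} (hf : Function.Surjective f) :
    Function.Surjective (map p f) :=
  QuotientAddGroup.map_surjective_of_surjective _ _ f (QuotientAddGroup.mk_surjective.comp hf) _

def reduceEnd : AddMonoid.End M →+* Module.End (ZMod p) (QuotNsmul p M) where
  toFun T := (map p T).toZModLinearMap p
  map_one' := LinearMap.ext fun x => QuotientAddGroup.induction_on x fun _ => rfl
  map_mul' _ _ := LinearMap.ext fun x => QuotientAddGroup.induction_on x fun _ => rfl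
  map_zero' := LinearMap.ext fun x => QuotientAddGroup.induction_on x fun _ => rfl
  map_add' _ _ := LinearMap.ext fun x => QuotientAddGroup.induction_on x fun _ => rfl

theorem reduceEnd_pow_mk (T : AddMonoid.End M) (n : ℕ) (x : M) :
    (reduceEnd p T ^ n) x = ((T ^ n) x : QuotNsmul p M) := by
  rw [← map_pow]
  rfl

theorem mk_aeval (T : AddMonoid.End M) (f : ℤ[X]) (x : M) :
    (aeval T f x : QuotNsmul p M) = aeval (reduceEnd p T) f x := by
  have h := aeval_algHom_apply (reduceEnd p).toIntAlgHom T f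
  exact (LinearMap.congr_fun h (x : QuotNsmul p M)).symm

theorem reduceEnd_pow_eq_zero_of_natCard_eq [Fact p.Prime] {T : AddMonoid.End M}
    (hT : IsNilpotent T) {r : ℕ} (hM : Nat.card (QuotNsmul p M) = p ^ r) :
    reduceEnd p T ^ r = 0 := by
  have : Finite (QuotNsmul p M) :=
    Nat.finite_of_card_ne_zero (hM ▸ pow_ne_zero r (Fact.out : p.Prime).ne_zero)
  have hrank : finrank (ZMod p) (QuotNsmul p M) = r := by
    rw [natCard_eq_pow_finrank (K := ZMod p), Nat.card_zmod] at hM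
    exact Nat.pow_right_injective (Fact.out : p.Prime).two_le hM
  have hchar := (hT.map (reduceEnd p)).charpoly_eq_X_pow_finrank
  simpa only [hchar, hrank, map_pow, aeval_X] using (reduceEnd p T).aeval_self_charpoly

theorem surjective_linearCombination_of_cyclic {T : AddMonoid.End M} {g : M}
    (hcyc : ∀ x, ∃ f : ℤ[X], x = aeval T f g) {r : ℕ} (hg : (reduceEnd p T ^ r) g = 0) :
    Function.Surjective
      (Fintype.linearCombination (ZMod p) fun i : Fin r => (reduceEnd p T ^ (i : ℕ)) g) := by
  rw [← LinearMap.range_eq_top, Fintype.range_linearCombination, eq_top_iff]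
  rintro x -
  induction x using QuotientAddGroup.induction_on with
  | H x =>
    obtain ⟨f, rfl⟩ := hcyc x
    rw [mk_aeval]
    exact Module.End.aeval_apply_mem_span_pow_apply hg f

end QuotNsmul

namespace ConicTransition

variable {p : ℕ} {A B : Type*} [AddCommGroup A] [AddCommGroup B] (ct : ConicTransition p A B)

theorem exists_TA_pow_genA_eq_nsmul {r : ℕ} (hrA : Nat.card (QuotNsmul p A) = p ^ r) :
    ∃ h : ℤ[X], (ct.TA ^ r) ct.genA = p • aeval ct.TA h ct.genA := by
  have := Fact.mk ct.hp
  have hT : (QuotNsmul.reduceEnd p ct.TA ^ r) ct.genA = 0 := by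
    rw [QuotNsmul.reduceEnd_pow_eq_zero_of_natCard_eq p ct.hTAnil hrA, LinearMap.zero_apply]
  rw [QuotNsmul.reduceEnd_pow_mk, QuotNsmul.mk_eq_zero_iff] at hT
  obtain ⟨y, hy⟩ := hT
  obtain ⟨h, rfl⟩ := ct.hcycA y
  exact ⟨h, hy.symm⟩

theorem reduceEnd_TB_pow_genB_eq_zero {r : ℕ} (hrd : r < ct.d) {h : ℤ[X]}
    (hh : (ct.TA ^ r) ct.genA = p • aeval ct.TA h ct.genA) :
    (QuotNsmul.reduceEnd p ct.TB ^ r) ct.genB = 0 := by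
  have := Fact.mk ct.hp
  have hN : ct.N ((ct.TB ^ r) ct.genB - p • aeval ct.TB h ct.genB) = 0 := by
    have hpow : ct.N ((ct.TB ^ r) ct.genB) = (ct.TA ^ r) ct.genA := by
      rw [AddMonoid.End.coe_pow, AddMonoid.End.coe_pow,
        (Function.Semiconj.iterate_right ct.hcommN r).eq, ct.hgen]
    rw [map_sub, map_nsmul, hpow, ct.N.map_aeval_apply ct.hcommN, ct.hgen, hh, sub_self]
  obtain ⟨y, hy⟩ := (ct.hker _).1 hN
  obtain ⟨f, rfl⟩ := ct.hcycB y
  replace hy := congrArg (fun x : B => (x : QuotNsmul p B)) hy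
  simp only [QuotientAddGroup.mk_sub, QuotNsmul.mk_nsmul_self, sub_zero,
    ← QuotNsmul.reduceEnd_pow_mk, QuotNsmul.mk_aeval] at hy
  set T := QuotNsmul.reduceEnd p ct.TB
  set g : QuotNsmul p B := ↑ct.genB
  have hTf : Commute T (aeval T f) := by
    simpa only [aeval_X] using (Commute.all X f).map (aeval T)
  have hfix : (T ^ (ct.d - r) * aeval T f) ((T ^ r) g) = (T ^ r) g :=
    calc (T ^ (ct.d - r) * aeval T f) ((T ^ r) g)
        = (T ^ (ct.d - r) * (T ^ r * aeval T f)) g := by rw [(hTf.pow_left r).eq]; rfl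
      _ = (T ^ ct.d) (aeval T f g) := by
        rw [← mul_assoc, ← pow_add, Nat.sub_add_cancel hrd.le]; rfl
      _ = aeval T ct.ω (aeval T f g) := by
        rw [← aeval_map_algebraMap (ZMod p) T ct.ω, algebraMap_int_eq,
          Polynomial.map_intCastRingHom_eq_X_pow ct.hωmonic ct.hωdeg ct.hωmodp, aeval_X_pow]
      _ = (T ^ r) g := hy.symm
  have hnil : IsNilpotent (T ^ (ct.d - r) * aeval T f) :=
    (hTf.pow_left _).isNilpotent_mul_right
      ((IsNilpotent.map ct.hTBnil (QuotNsmul.reduceEnd p)).pow_of_pos (Nat.sub_ne_zero_of_lt hrd))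
  exact Module.End.eq_zero_of_isNilpotent_of_apply_eq_self hnil hfix

end ConicTransition

theorem stmt_13_general (p : ℕ) (A B : Type*) [AddCommGroup A] [AddCommGroup B]
    (ct : ConicTransition p A B)
    (r : ℕ)
    (hrA : Nat.card (A ⧸ (p • AddMonoidHom.id A).range) = p ^ r)
    (hrd : r < ct.d) :
    Nat.card (B ⧸ (p • AddMonoidHom.id B).range) = p ^ r := by
  have := Fact.mk ct.hp
  obtain ⟨h, hh⟩ := ct.exists_TA_pow_genA_eq_nsmul hrA
  have hsurj := QuotNsmul.surjective_linearCombination_of_cyclic p ct.hcycB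
    (ct.reduceEnd_TB_pow_genB_eq_zero hrd hh)
  have : Finite (QuotNsmul p B) := Finite.of_surjective _ hsurj
  refine le_antisymm ?_ ?_
  · calc Nat.card (QuotNsmul p B) ≤ Nat.card (Fin r → ZMod p) :=
          Nat.card_le_card_of_surjective _ hsurj
      _ = p ^ r := by simp
  · calc p ^ r = Nat.card (QuotNsmul p A) := hrA.symm
      _ ≤ Nat.card (QuotNsmul p B) :=
          Nat.card_le_card_of_surjective _ (QuotNsmul.map_surjective p ct.hNsurj)

/-- In a conic transition `(A, B)` where `ω ≡ T^d mod p` annihilates `A`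
and `r = p`-rank`(A) < d`, the transition is stable: `p`-rank`(B) = r`. -/
theorem stmt_13 (p : ℕ) (A B : Type*) [AddCommGroup A] [AddCommGroup B]
    [Fintype A] [Fintype B] (ct : ConicTransition p A B)
    (r : ℕ)
    (hrA : Nat.card (A ⧸ (p • AddMonoidHom.id A).range) = p ^ r)
    (hrd : r < ct.d) :
    Nat.card (B ⧸ (p • AddMonoidHom.id B).range) = p ^ r :=
  stmt_13_general p A B ct r hrA hrd
end

section
/- Let (A,B) be a conic transition with transition module 𝒯 = B/ι(A). Then 𝒯 is a cyclic ℤ_p[T]-module annihilated by ν = ((ω+1)^p−1)/ω, and consequently p-rank(B) ≤ p-rank(A) + (p−1)·d, where d = deg(ω). -/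
open Polynomial

theorem Polynomial.map_zmod_eq_X_pow_of_dvd_coeff {p : ℕ} {ω : ℤ[X]} (hω : ω.Monic)
    (hdvd : ∀ i < ω.natDegree, (p : ℤ) ∣ ω.coeff i) :
    ω.map (Int.castRingHom (ZMod p)) = X ^ ω.natDegree := by
  ext i
  rw [coeff_map, coeff_X_pow]
  rcases lt_trichotomy i ω.natDegree with hi | rfl | hi
  · simpa [hi.ne] using (ZMod.intCast_zmod_eq_zero_iff_dvd _ _).2 (hdvd i hi)
  · simp [hω.coeff_natDegree]
  · simp [hi.ne', coeff_eq_zero_of_natDegree_lt hi]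

theorem geom_sum_add_one_eq_pow_pred {R : Type*} [CommRing R] [IsDomain R] (p : ℕ)
    [Fact p.Prime] [CharP R p] {x : R} (hx : x ≠ 0) :
    ∑ i ∈ Finset.range p, (x + 1) ^ i = x ^ (p - 1) := by
  refine mul_right_cancel₀ hx ?_
  have := geom_sum_mul (x + 1) p
  rw [add_sub_cancel_right, add_pow_char, one_pow, add_sub_cancel_right] at this
  rw [this, ← pow_succ, Nat.sub_add_cancel (Fact.out : p.Prime).one_lt.le]

theorem Polynomial.C_dvd_X_pow_sub_geom_sum_add_one {p : ℕ} [Fact p.Prime] {ω : ℤ[X]}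
    (hω : ω.Monic) (hdvd : ∀ i < ω.natDegree, (p : ℤ) ∣ ω.coeff i) :
    C (p : ℤ) ∣ X ^ ((p - 1) * ω.natDegree) - ∑ i ∈ Finset.range p, (ω + 1) ^ i := by
  have hmap : (∑ i ∈ Finset.range p, (ω + 1) ^ i).map (Int.castRingHom (ZMod p))
      = X ^ ((p - 1) * ω.natDegree) := by
    simp only [Polynomial.map_sum, Polynomial.map_pow, Polynomial.map_add, Polynomial.map_one,
      map_zmod_eq_X_pow_of_dvd_coeff hω hdvd]
    rw [geom_sum_add_one_eq_pow_pred p (pow_ne_zero _ X_ne_zero), ← pow_mul, mul_comm]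
  rw [C_dvd_iff_dvd_coeff]
  intro i
  rw [← ZMod.intCast_zmod_eq_zero_iff_dvd, ← eq_intCast (Int.castRingHom (ZMod p)), ← coeff_map,
    Polynomial.map_sub, hmap]
  simp

section Cyclic

variable {B : Type*} [AddCommGroup B] {T : AddMonoid.End B} {M : Submodule ℤ B}

theorem pow_apply_mem_of_forall_apply_mem (hM : ∀ x ∈ M, T x ∈ M) (n : ℕ) {x : B} (hx : x ∈ M) :
    (T ^ n) x ∈ M := by
  induction n with
  | zero => exact hx
  | succ n ih => rw [pow_succ']; exact hM _ ih

theorem aeval_apply_mem_sup_span_pow_apply (hM : ∀ x ∈ M, T x ∈ M) {g : B} {D : ℕ}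
    (hg : (T ^ D) g ∈ M) (f : ℤ[X]) :
    aeval T f g ∈ M ⊔ Submodule.span ℤ (Set.range fun i : Fin D => (T ^ (i : ℕ)) g) := by
  have hsum : aeval T f g = ∑ n ∈ Finset.range (f.natDegree + 1), f.coeff n • (T ^ n) g := by
    rw [aeval_eq_sum_range]; exact AddMonoidHom.finsetSum_apply _ _ _
  rw [hsum]
  refine Submodule.sum_mem _ fun n _ => Submodule.smul_mem _ _ ?_
  rcases lt_or_ge n D with hn | hn
  · exact Submodule.mem_sup_right (Submodule.subset_span ⟨⟨n, hn⟩, rfl⟩)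
  · obtain ⟨k, rfl⟩ := Nat.exists_eq_add_of_le hn
    rw [add_comm, pow_add]
    exact Submodule.mem_sup_left (pow_apply_mem_of_forall_apply_mem hM k hg)

end Cyclic

theorem ZMod.val_intCast_nsmul_of_nsmul_eq_zero {B : Type*} [AddCommGroup B] {p : ℕ} [NeZero p]
    {q : B} (hq : p • q = 0) (c : ℤ) : (c : ZMod p).val • q = c • q := by
  rw [← natCast_zsmul, ZMod.val_intCast, ← mod_addOrderOf_zsmul q (c % p),
    Int.emod_emod_of_dvd _ (Int.natCast_dvd_natCast.2 (addOrderOf_dvd_of_nsmul_eq_zero hq)),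
    mod_addOrderOf_zsmul]

theorem card_quotient_range_nsmul_le {A B : Type*} [AddCommGroup A] [AddCommGroup B] {p D : ℕ}
    [NeZero p] [Finite (A ⧸ (p • AddMonoidHom.id A).range)] (φ : A →+ B) (t : Fin D → B)
    (h : ∀ x : B, ∃ (a : A) (c : Fin D → ℤ) (y : B), x = φ a + ∑ i, c i • t i + p • y) :
    Nat.card (B ⧸ (p • AddMonoidHom.id B).range) ≤
      Nat.card (A ⧸ (p • AddMonoidHom.id A).range) * p ^ D := by
  set π := QuotientAddGroup.mk' (p • AddMonoidHom.id B).range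
  have hπ : ∀ y, π (p • y) = 0 := fun y => (QuotientAddGroup.eq_zero_iff _).2 ⟨y, rfl⟩
  let φbar := QuotientAddGroup.lift (p • AddMonoidHom.id A).range (π.comp φ) <| by
    rintro _ ⟨a, rfl⟩
    exact (π.comp φ).mem_ker.2 (by simpa using hπ (φ a))
  let F : (A ⧸ (p • AddMonoidHom.id A).range) × (Fin D → ZMod p) → B ⧸ _ :=
    fun z => φbar z.1 + ∑ i, (z.2 i).val • π (t i)
  have hF : Function.Surjective F := by
    intro x
    obtain ⟨x, rfl⟩ := QuotientAddGroup.mk'_surjective _ x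
    obtain ⟨a, c, y, rfl⟩ := h x
    refine ⟨(QuotientAddGroup.mk a, fun i => c i), ?_⟩
    have hred : ∀ i, ((c i : ZMod p).val) • π (t i) = c i • π (t i) := fun i =>
      ZMod.val_intCast_nsmul_of_nsmul_eq_zero (by rw [← map_nsmul, hπ]) _
    show _ = π (φ a + ∑ i, c i • t i + p • y)
    rw [map_add, hπ, add_zero, map_add, map_sum]
    simp only [F, hred, map_zsmul]
    rfl
  calc Nat.card (B ⧸ (p • AddMonoidHom.id B).range)
      ≤ Nat.card ((A ⧸ (p • AddMonoidHom.id A).range) × (Fin D → ZMod p)) :=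
        Nat.card_le_card_of_surjective F hF
    _ = _ := by simp [Nat.card_prod]

namespace ConicTransition

variable {p : ℕ} {A B : Type*} [AddCommGroup A] [AddCommGroup B] (ct : ConicTransition p A B)

theorem TB_mem_range_sup_range_nsmul {x : B}
    (hx : x ∈ ct.ι.range ⊔ (p • AddMonoidHom.id B).range) :
    ct.TB x ∈ ct.ι.range ⊔ (p • AddMonoidHom.id B).range := by
  obtain ⟨_, ⟨a, rfl⟩, _, ⟨y, rfl⟩, rfl⟩ := AddSubgroup.mem_sup.1 hx
  refine AddSubgroup.mem_sup.2 ⟨ct.ι (ct.TA a), ⟨_, rfl⟩, p • ct.TB y, ⟨ct.TB y, rfl⟩, ?_⟩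
  simp [ct.hcommι]

theorem TB_pow_genB_mem_range_sup_range_nsmul :
    (ct.TB ^ ((p - 1) * ct.d)) ct.genB ∈ ct.ι.range ⊔ (p • AddMonoidHom.id B).range := by
  have := Fact.mk ct.hp
  obtain ⟨g, hg⟩ := C_dvd_X_pow_sub_geom_sum_add_one ct.hωmonic (ct.hωdeg ▸ ct.hωmodp)
  have hT := congrArg (fun f => aeval ct.TB f ct.genB) (sub_eq_iff_eq_add.1 hg)
  simp only [ct.hωdeg, aeval_X_pow, map_add, map_mul, aeval_C] at hT
  rw [hT]
  refine add_mem (AddSubgroup.mem_sup_right ⟨aeval ct.TB g ct.genB, ?_⟩)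
    (AddSubgroup.mem_sup_left ⟨ct.N ct.genB, ct.hν _⟩)
  simp only [AddMonoidHom.smul_apply, AddMonoidHom.id_apply, algebraMap_int_eq, eq_intCast,
    Int.cast_natCast]
  exact (AddMonoid.End.natCast_apply p _).symm

theorem exists_eq_ι_add_sum_add_nsmul (x : B) :
    ∃ (a : A) (c : Fin ((p - 1) * ct.d) → ℤ) (y : B),
      x = ct.ι a + ∑ i, c i • (ct.TB ^ (i : ℕ)) ct.genB + p • y := by
  obtain ⟨f, hf⟩ := ct.hcycB x
  obtain ⟨m, hm, s, hs, hms⟩ := Submodule.mem_sup.1 <|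
    aeval_apply_mem_sup_span_pow_apply
      (M := AddSubgroup.toIntSubmodule (ct.ι.range ⊔ (p • AddMonoidHom.id B).range))
      (fun _ => ct.TB_mem_range_sup_range_nsmul) ct.TB_pow_genB_mem_range_sup_range_nsmul f
  obtain ⟨_, ⟨a, rfl⟩, _, ⟨y, rfl⟩, rfl⟩ := AddSubgroup.mem_sup.1 hm
  obtain ⟨c, rfl⟩ := (Submodule.mem_span_range_iff_exists_fun ℤ).1 hs
  refine ⟨a, c, y, ?_⟩
  rw [hf, ← hms, AddMonoidHom.smul_apply, AddMonoidHom.id_apply, add_right_comm]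

end ConicTransition

theorem stmt_14_general (p : ℕ) (A B : Type*) [AddCommGroup A] [AddCommGroup B]
    (ct : ConicTransition p A B)
    (rA rB : ℕ)
    (hrA : Nat.card (A ⧸ (p • AddMonoidHom.id A).range) = p ^ rA)
    (hrB : Nat.card (B ⧸ (p • AddMonoidHom.id B).range) = p ^ rB) :
    (∀ x : B, ∃ f : Polynomial ℤ,
      x - Polynomial.aeval ct.TB f ct.genB ∈ ct.ι.range) ∧
    (∀ x : B,
      Polynomial.aeval ct.TB (∑ i ∈ Finset.range p, (ct.ω + 1) ^ i) x ∈ ct.ι.range) ∧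
    rB ≤ rA + (p - 1) * ct.d := by
  refine ⟨fun x => ?_, fun x => ⟨ct.N x, ct.hν x⟩, ?_⟩
  · obtain ⟨f, hf⟩ := ct.hcycB x
    exact ⟨f, by rw [← hf, sub_self]; exact zero_mem _⟩
  have := NeZero.of_pos ct.hp.pos
  have : Finite (A ⧸ (p • AddMonoidHom.id A).range) :=
    Nat.finite_of_card_ne_zero (hrA ▸ pow_ne_zero _ ct.hp.ne_zero)
  have hcard := card_quotient_range_nsmul_le ct.ι _ ct.exists_eq_ι_add_sum_add_nsmul
  rw [hrA, hrB, ← pow_add] at hcard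
  exact (Nat.pow_le_pow_iff_right ct.hp.one_lt).1 hcard

/-- In a conic transition `(A, B)` the transition module `𝒯 = B/ι(A)` is a
cyclic `ℤ_p[T]`-module annihilated by `ν = ((ω+1)^p − 1)/ω`, and consequently
`p`-rank`(B) ≤ p`-rank`(A) + (p−1)·d`. -/
theorem stmt_14 (p : ℕ) (A B : Type*) [AddCommGroup A] [AddCommGroup B]
    [Fintype A] [Fintype B] (ct : ConicTransition p A B)
    (rA rB : ℕ)
    (hrA : Nat.card (A ⧸ (p • AddMonoidHom.id A).range) = p ^ rA)
    (hrB : Nat.card (B ⧸ (p • AddMonoidHom.id B).range) = p ^ rB) :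
    (∀ x : B, ∃ f : Polynomial ℤ,
      x - Polynomial.aeval ct.TB f ct.genB ∈ ct.ι.range) ∧
    (∀ x : B,
      Polynomial.aeval ct.TB (∑ i ∈ Finset.range p, (ct.ω + 1) ^ i) x ∈ ct.ι.range) ∧
    rB ≤ rA + (p - 1) * ct.d :=
  stmt_14_general p A B ct rA rB hrA hrB
end

section
/- Let B be a finite abelian p-group, cyclic as ℤ_p[T]-module with generator b and nilpotent T-action, whose socle S(B) = B[p] is cyclic as 𝔽_p[T]-module. Define ψ(x) = (ord(x)/p)·x for x ≠ 0. Then the following are equivalent: (ii) ord(T^i b) is constant for 0 ≤ i < p-rank(B) (empty jump set); (iii) ψ(b) generates S(B) (the socle is straight); (iv) sexp(B) = exp(B), where sexp(B) = min{ord(x) : x ∈ B \ pB}. -/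
/-!
Let `addOrderOf b = exp B = p ^ (k + 1)` and `ψ = p ^ k • b`. Multiplication by `p ^ k` kills
`pB` and maps `B` into the socle `B[p]`, with image the `ℤ[T]`-span of `ψ`. Since
`|B[p]| = |B / pB|`, its kernel is exactly `pB` iff its image is all of `B[p]`: this is
(iii) ⟺ (iv).

If `T ^ n` kills a `p`-torsion element `a` but no smaller power does, then the `T ^ i a` with
`i < n` form an `𝔽_p`-basis of the span of `a`, which therefore has `p ^ n` elements. As
`|B[p]| = p ^ r'`, the span of `ψ` is all of `B[p]` iff `T ^ i ψ = p ^ k • T ^ i b ≠ 0` for every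
`i < r'`, i.e. iff every `T ^ i b` with `i < r'` has order `p ^ (k + 1)`: this is (ii) ⟺ (iii).
-/

open Polynomial

theorem zsmul_eq_zsmul_of_dvd_sub {A : Type*} [AddCommGroup A] {p : ℕ} {y : A} (hy : p • y = 0)
    {z w : ℤ} (h : (p : ℤ) ∣ z - w) : z • y = w • y := by
  obtain ⟨t, ht⟩ := h
  rw [← sub_eq_zero, ← sub_smul, ht, mul_comm, mul_smul, natCast_zsmul, hy, smul_zero]

theorem exists_addOrderOf_eq_prime_pow_succ {G : Type*} [AddMonoid G] {p : ℕ} (hp : p.Prime)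
    {x : G} (hx : ∃ m, p ^ m • x = 0) (hx0 : x ≠ 0) : ∃ k, addOrderOf x = p ^ (k + 1) := by
  obtain ⟨m, hm⟩ := hx
  obtain ⟨j, -, hj⟩ := (Nat.dvd_prime_pow hp).1 (addOrderOf_dvd_of_nsmul_eq_zero hm)
  obtain _ | k := j
  · exact absurd (AddMonoid.addOrderOf_eq_one_iff.1 hj) hx0
  · exact ⟨k, hj⟩

theorem addOrderOf_eq_prime_pow_succ_iff {G : Type*} [AddMonoid G] {p k : ℕ} [Fact p.Prime]
    {x : G} (hx : p ^ (k + 1) • x = 0) : addOrderOf x = p ^ (k + 1) ↔ p ^ k • x ≠ 0 := by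
  refine ⟨fun h h0 => ?_, fun h => addOrderOf_eq_prime_pow h hx⟩
  have := h ▸ addOrderOf_dvd_of_nsmul_eq_zero h0
  rw [Nat.pow_dvd_pow_iff_le_right (Fact.out : p.Prime).one_lt] at this
  omega

theorem ker_nsmul_le_iff_addOrderOf_eq {G : Type*} [AddCommGroup G] {p k : ℕ} [Fact p.Prime]
    (hG : ∀ x : G, p ^ (k + 1) • x = 0) {H : AddSubgroup G} :
    (p ^ k • AddMonoidHom.id G).ker ≤ H ↔ ∀ x ∉ H, addOrderOf x = p ^ (k + 1) := by
  simp_rw [addOrderOf_eq_prime_pow_succ_iff (hG _)]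
  exact ⟨fun h x hx h0 => hx (h h0), fun h x hx => not_not.1 fun hx' => h x hx' hx⟩

theorem range_nsmul_le_ker_nsmul {A : Type*} [AddCommGroup A] {m n : ℕ}
    (h : ∀ x : A, (n * m) • x = 0) :
    (m • AddMonoidHom.id A).range ≤ (n • AddMonoidHom.id A).ker := by
  rintro _ ⟨y, rfl⟩
  exact (smul_smul n m y).trans (h y)

namespace AddMonoidHom

variable {A : Type*} [AddCommGroup A] [Finite A] {φ ψ : A →+ A}

theorem range_eq_ker_of_ker_eq_range (hψφ : ψ.range ≤ φ.ker) (h : ψ.ker = φ.range) :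
    ψ.range = φ.ker := by
  have hcard : ∀ χ : A →+ A, Nat.card χ.ker * Nat.card χ.range = Nat.card A := fun χ => by
    rw [← χ.ker.card_mul_index, AddSubgroup.index_ker]
  refine AddSubgroup.eq_of_le_of_card_ge hψφ (le_of_eq ?_)
  refine Nat.eq_of_mul_eq_mul_left (Nat.card_pos (α := φ.range)) ?_
  rw [← h, hcard, mul_comm, h, hcard]

theorem ker_eq_range_iff_range_eq_ker (hφψ : φ.range ≤ ψ.ker) (hψφ : ψ.range ≤ φ.ker) :
    ψ.ker = φ.range ↔ ψ.range = φ.ker :=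
  ⟨range_eq_ker_of_ker_eq_range hψφ, fun h => (range_eq_ker_of_ker_eq_range hφψ h.symm).symm⟩

end AddMonoidHom

namespace AddMonoid.End

variable {A : Type*} [AddCommGroup A]

def polySpan (U : AddMonoid.End A) (a : A) : AddSubgroup A where
  carrier := {x | ∃ f : ℤ[X], x = aeval U f a}
  add_mem' := by
    rintro _ _ ⟨f, rfl⟩ ⟨g, rfl⟩
    exact ⟨f + g, by rw [map_add]; rfl⟩
  zero_mem' := ⟨0, by rw [map_zero]; rfl⟩
  neg_mem' := by
    rintro _ ⟨f, rfl⟩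
    exact ⟨-f, by rw [map_neg]; rfl⟩

variable {U : AddMonoid.End A} {a x : A}

theorem pow_apply_mem_polySpan (i : ℕ) : (U ^ i) a ∈ polySpan U a := ⟨X ^ i, by simp⟩

theorem nsmul_eq_zero_of_mem_polySpan {n : ℕ} (ha : n • a = 0) (hx : x ∈ polySpan U a) :
    n • x = 0 := by
  obtain ⟨f, rfl⟩ := hx
  rw [← map_nsmul, ha, map_zero]

theorem nsmul_pow_apply_eq_zero {n : ℕ} (ha : n • a = 0) (m : ℕ) : n • (U ^ m) a = 0 :=
  nsmul_eq_zero_of_mem_polySpan ha (pow_apply_mem_polySpan m)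

theorem pow_add_apply (m n : ℕ) (y : A) : (U ^ (m + n)) y = (U ^ m) ((U ^ n) y) := by
  rw [pow_add]; rfl

theorem pow_apply_eq_zero_of_le {n m : ℕ} (hn : (U ^ n) a = 0) (hnm : n ≤ m) :
    (U ^ m) a = 0 := by
  rw [← Nat.sub_add_cancel hnm, pow_add_apply, hn, map_zero]

theorem finsetSum_apply {ι : Type*} (s : Finset ι) (F : ι → AddMonoid.End A) (y : A) :
    (∑ i ∈ s, F i) y = ∑ i ∈ s, F i y :=
  AddMonoidHom.finsetSum_apply (f := fun i => (F i : A →+ A)) s y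

theorem aeval_apply_eq_sum {n : ℕ} (hn : (U ^ n) a = 0) (f : ℤ[X]) :
    aeval U f a = ∑ i : Fin n, f.coeff i • (U ^ (i : ℕ)) a := by
  rw [Fin.sum_univ_eq_sum_range (fun i => f.coeff i • (U ^ i) a),
    aeval_eq_sum_range' (lt_max_of_lt_right (Nat.lt_succ_self f.natDegree) : _ < max n _),
    finsetSum_apply]
  refine (Finset.sum_subset (Finset.range_subset_range.2 (le_max_left _ _)) ?_).symm
  intro i _ hi
  change f.coeff i • (U ^ i) a = 0
  rw [pow_apply_eq_zero_of_le hn (not_lt.1 (Finset.mem_range.not.1 hi)), smul_zero]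

theorem dvd_of_sum_zsmul_pow_apply_eq_zero {p n : ℕ} (hp : p.Prime) (ha : p • a = 0)
    (hn : (U ^ n) a = 0) (hn' : ∀ i < n, (U ^ i) a ≠ 0) {d : Fin n → ℤ}
    (hd : ∑ i, d i • (U ^ (i : ℕ)) a = 0) (i : Fin n) : (p : ℤ) ∣ d i := by
  induction i using WellFoundedLT.induction with
  | _ i ih =>
  have hi := i.isLt
  -- Applying `U ^ (n - 1 - i)` kills every term but the `i`-th one.
  have hlast : d i • (U ^ (n - 1)) a = 0 := by
    have := congrArg (U ^ (n - 1 - i)) hd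
    rw [map_sum, map_zero, Finset.sum_eq_single i] at this
    · rwa [map_zsmul, ← pow_add_apply, Nat.sub_add_cancel (by omega)] at this
    · intro j _ hji
      rw [map_zsmul, ← pow_add_apply]
      rcases lt_or_gt_of_ne hji with hlt | hgt
      · rw [zsmul_eq_zsmul_of_dvd_sub (nsmul_pow_apply_eq_zero ha _) (w := 0)
          (by simpa using ih j hlt), zero_smul]
      · rw [pow_apply_eq_zero_of_le hn (by omega), smul_zero]
    · simp
  have hord : addOrderOf ((U ^ (n - 1)) a) = p := by
    have := Fact.mk hp
    exact addOrderOf_eq_prime (nsmul_pow_apply_eq_zero ha _) (hn' _ (by omega))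
  exact_mod_cast hord ▸ addOrderOf_dvd_iff_zsmul_eq_zero.2 hlast

theorem card_polySpan {p n : ℕ} (hp : p.Prime) (ha : p • a = 0) (hn : (U ^ n) a = 0)
    (hn' : ∀ i < n, (U ^ i) a ≠ 0) : Nat.card (polySpan U a) = p ^ n := by
  have := Fact.mk hp
  let φ : (Fin n → ZMod p) → polySpan U a := fun c =>
    ⟨∑ i, ((c i).val : ℤ) • (U ^ (i : ℕ)) a,
      sum_mem fun i _ => zsmul_mem (pow_apply_mem_polySpan _) _⟩
  have hφ : Function.Bijective φ := by
    refine ⟨fun c c' hcc' => funext fun i => ?_, ?_⟩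
    · have hd : ∑ i, (((c i).val : ℤ) - (c' i).val) • (U ^ (i : ℕ)) a = 0 := by
        simp only [sub_smul, Finset.sum_sub_distrib]
        exact sub_eq_zero.2 (congrArg Subtype.val hcc')
      have := dvd_of_sum_zsmul_pow_apply_eq_zero hp ha hn hn' hd i
      rw [← ZMod.intCast_eq_intCast_iff_dvd_sub] at this
      simpa using this.symm
    · rintro ⟨_, f, rfl⟩
      refine ⟨fun i => f.coeff i, Subtype.ext ?_⟩
      change ∑ i : Fin n, ((f.coeff i : ZMod p).val : ℤ) • (U ^ (i : ℕ)) a = aeval U f a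
      rw [aeval_apply_eq_sum hn]
      refine Finset.sum_congr rfl fun i _ =>
        zsmul_eq_zsmul_of_dvd_sub (nsmul_pow_apply_eq_zero ha _) ?_
      rw [← ZMod.intCast_eq_intCast_iff_dvd_sub]
      simp
  rw [← Nat.card_congr (Equiv.ofBijective φ hφ)]
  simp

theorem polySpan_eq_iff_pow_apply_ne_zero [Finite A] {p r : ℕ} (hp : p.Prime)
    (hnil : ∃ M, U ^ M = 0) (ha : p • a = 0) {H : AddSubgroup A} (hle : polySpan U a ≤ H)
    (hH : Nat.card H = p ^ r) : polySpan U a = H ↔ ∀ i < r, (U ^ i) a ≠ 0 := by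
  classical
  obtain ⟨M, hM⟩ := hnil
  have hex : ∃ n, (U ^ n) a = 0 := ⟨M, by rw [hM]; rfl⟩
  have hcard := card_polySpan hp ha (Nat.find_spec hex) fun i hi => Nat.find_min hex hi
  have hpow : p ^ Nat.find hex ≤ p ^ r := hcard ▸ hH ▸ AddSubgroup.card_le_of_le hle
  rw [Nat.pow_le_pow_iff_right hp.one_lt] at hpow
  constructor
  · rintro rfl i hi
    have : Nat.find hex = r := Nat.pow_right_injective hp.two_le (hcard.symm.trans hH)
    exact Nat.find_min hex (this ▸ hi)
  · intro h
    have : Nat.find hex = r := le_antisymm hpow (not_lt.1 fun hlt => h _ hlt (Nat.find_spec hex))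
    exact AddSubgroup.eq_of_le_of_card_ge hle (by rw [hH, hcard, this])

theorem exponent_eq_addOrderOf (h : ∀ x, x ∈ polySpan U a) :
    AddMonoid.exponent A = addOrderOf a :=
  Nat.dvd_antisymm
    (AddMonoid.exponent_dvd_of_forall_nsmul_eq_zero fun x =>
      nsmul_eq_zero_of_mem_polySpan (addOrderOf_nsmul_eq_zero a) (h x))
    (AddMonoid.addOrder_dvd_exponent a)

theorem range_nsmul_eq_polySpan (h : ∀ x, x ∈ polySpan U a) (n : ℕ) :
    (n • AddMonoidHom.id A).range = polySpan U (n • a) := by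
  ext x
  constructor
  · rintro ⟨y, rfl⟩
    obtain ⟨f, rfl⟩ := h y
    exact ⟨f, (map_nsmul (aeval U f) n a).symm⟩
  · rintro ⟨f, rfl⟩
    exact ⟨aeval U f a, (map_nsmul (aeval U f) n a).symm⟩

end AddMonoid.End

open AddMonoid.End

theorem stmt_16_general (p : ℕ) (hp : p.Prime) (B : Type*) [AddCommGroup B] [Fintype B]
    (hpB : ∀ x : B, ∃ k : ℕ, p ^ k • x = 0)
    (T : AddMonoid.End B) (hnil : ∃ M : ℕ, T ^ M = 0)
    (b : B) (hb : b ≠ 0)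
    (hcyc : ∀ x : B, ∃ f : Polynomial ℤ, x = Polynomial.aeval T f b)
    (r' : ℕ) (hr : Nat.card (B ⧸ (p • AddMonoidHom.id B).range) = p ^ r') :
    ((∀ i < r', addOrderOf ((T ^ i) b) = addOrderOf b) ↔
      (∀ x : B, p • x = 0 →
        ∃ f : Polynomial ℤ, x = Polynomial.aeval T f ((addOrderOf b / p) • b))) ∧
    ((∀ x : B, p • x = 0 →
        ∃ f : Polynomial ℤ, x = Polynomial.aeval T f ((addOrderOf b / p) • b)) ↔
      (∀ x : B, x ∉ (p • AddMonoidHom.id B).range →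
        addOrderOf x = AddMonoid.exponent B)) := by
  have := Fact.mk hp
  obtain ⟨k, hbk⟩ := exists_addOrderOf_eq_prime_pow_succ hp (hpB b) hb
  have hdiv : addOrderOf b / p = p ^ k := by rw [hbk, pow_succ, Nat.mul_div_cancel _ hp.pos]
  have hexp : AddMonoid.exponent B = p ^ (k + 1) := hbk ▸ exponent_eq_addOrderOf hcyc
  have hexp_nsmul : ∀ x : B, p ^ (k + 1) • x = 0 := hexp ▸ AddMonoid.exponent_nsmul_eq_zero
  have hp_range_le : (p • AddMonoidHom.id B).range ≤ (p ^ k • AddMonoidHom.id B).ker :=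
    range_nsmul_le_ker_nsmul (pow_succ p k ▸ hexp_nsmul)
  have hpk_range_le : (p ^ k • AddMonoidHom.id B).range ≤ (p • AddMonoidHom.id B).ker :=
    range_nsmul_le_ker_nsmul (pow_succ' p k ▸ hexp_nsmul)
  have hψ : p • p ^ k • b = 0 := hpk_range_le ⟨b, rfl⟩
  have hle : T.polySpan (p ^ k • b) ≤ (p • AddMonoidHom.id B).ker := fun _ =>
    nsmul_eq_zero_of_mem_polySpan hψ
  have hsocle : Nat.card (p • AddMonoidHom.id B).ker = p ^ r' := by
    rw [← AddSubgroup.index_range, AddSubgroup.index_eq_card, hr]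
  have hii : (∀ i < r', addOrderOf ((T ^ i) b) = addOrderOf b) ↔
      ∀ i < r', (T ^ i) (p ^ k • b) ≠ 0 := by
    simp_rw [hbk, addOrderOf_eq_prime_pow_succ_iff (hexp_nsmul _), map_nsmul]
  have hiii : (∀ x : B, p • x = 0 → ∃ f : ℤ[X], x = aeval T f (p ^ k • b)) ↔
      T.polySpan (p ^ k • b) = (p • AddMonoidHom.id B).ker :=
    hle.ge_iff_eq
  rw [hdiv, hii, hiii, hexp, ← ker_nsmul_le_iff_addOrderOf_eq hexp_nsmul,
    hp_range_le.ge_iff_eq', AddMonoidHom.ker_eq_range_iff_range_eq_ker hp_range_le hpk_range_le,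
    range_nsmul_eq_polySpan hcyc, polySpan_eq_iff_pow_apply_ne_zero hp hnil hψ hle hsocle]
  exact ⟨Iff.rfl, Iff.rfl⟩

/-- Let `B` be a finite abelian `p`-group, cyclic as `ℤ_p[T]`-module with
generator `b` and nilpotent `T`, whose socle `S(B) = B[p]` is `𝔽_p[T]`-cyclic. With
`ψ(x) = (ord(x)/p)·x`, the following are equivalent:
(ii) `ord(T^i b)` is constant for `0 ≤ i < p`-rank`(B)` (empty jump set);
(iii) `ψ(b)` generates `S(B)` (the socle is *straight*);
(iv) `sexp(B) = exp(B)`, i.e. every `x ∈ B \ pB` has order `exp(B)`. -/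
theorem stmt_16 (p : ℕ) (hp : p.Prime) (B : Type*) [AddCommGroup B] [Fintype B]
    (hpB : ∀ x : B, ∃ k : ℕ, p ^ k • x = 0)
    (T : AddMonoid.End B) (hnil : ∃ M : ℕ, T ^ M = 0)
    (b : B) (hb : b ≠ 0)
    (hcyc : ∀ x : B, ∃ f : Polynomial ℤ, x = Polynomial.aeval T f b)
    (s : B) (hsS : p • s = 0)
    (hsoc : ∀ x : B, p • x = 0 → ∃ f : Polynomial ℤ, x = Polynomial.aeval T f s)
    (r' : ℕ) (hr : Nat.card (B ⧸ (p • AddMonoidHom.id B).range) = p ^ r') :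
    ((∀ i < r', addOrderOf ((T ^ i) b) = addOrderOf b) ↔
      (∀ x : B, p • x = 0 →
        ∃ f : Polynomial ℤ, x = Polynomial.aeval T f ((addOrderOf b / p) • b))) ∧
    ((∀ x : B, p • x = 0 →
        ∃ f : Polynomial ℤ, x = Polynomial.aeval T f ((addOrderOf b / p) • b)) ↔
      (∀ x : B, x ∉ (p • AddMonoidHom.id B).range →
        addOrderOf x = AddMonoid.exponent B)) :=
  stmt_16_general p hp B hpB T hnil b hb hcyc r' hr
end
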